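/- Suppose g ∈ ℝⁿ, H is a self-adjoint operator on ℝⁿ, λ ≥ 0, σ ≥ 0, and s ∈ ℝⁿ satisfy (H + σ‖g‖^{1/2}I + λI)s = −g and H + σ‖g‖^{1/2}I + λI ⪰ 0, and suppose ‖∇P(x) − g‖ ≤ ε₁ and ‖∇²P(x) − H‖ ≤ ε₂ (operator norm). Then P(x+s) ≤ P(x) − ½(σ‖g‖^{1/2} + λ)‖s‖² + ε₁‖s‖ + (ε₂/2)‖s‖² + (L₂/6)‖s‖³. -/

import Mathlib

/-!
Along the segment `t ↦ x + t • s` the second derivative of `P` grows at most like `L₂ ‖s‖³ t`,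
so two comparison arguments give the cubic Taylor bound
`P (x + s) ≤ P x + ⟪∇P x, s⟫ + ½ ⟪∇²P x s, s⟫ + L₂ ‖s‖³ / 6`.
Replacing `∇P x` and `∇²P x` by `g` and `H` costs `ε₁ ‖s‖` and `ε₂ ‖s‖² / 2`, and the shifted
Newton equation together with the semidefiniteness of `H + μ I`, `μ = σ ‖g‖^{1/2} + λ`, bounds the
quadratic model `⟪g, s⟫ + ½ ⟪H s, s⟫` by `-½ μ ‖s‖²`.
-/

noncomputable section

open RealInnerProductSpace

/-- `ℝⁿ` as a Euclidean space. -/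
abbrev En (n : ℕ) := EuclideanSpace ℝ (Fin n)

/-- The Hessian of `P` at `x`, as the derivative of the gradient map. -/
def hessP {n : ℕ} (P : En n → ℝ) (x : En n) : En n →L[ℝ] En n := fderiv ℝ (gradient P) x

open Set InnerProductSpace

theorem image_le_of_hasDerivAt_le {f f' B B' : ℝ → ℝ} {a b : ℝ}
    (hf : ∀ t, HasDerivAt f (f' t) t) (hB : ∀ t, HasDerivAt B (B' t) t) (ha : f a ≤ B a)
    (hle : ∀ t ∈ Ico a b, f' t ≤ B' t) : ∀ ⦃t⦄, t ∈ Icc a b → f t ≤ B t :=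
  image_le_of_deriv_right_le_deriv_boundary (fun t _ => (hf t).continuousAt.continuousWithinAt)
    (fun t _ => (hf t).hasDerivWithinAt) ha (fun t _ => (hB t).continuousAt.continuousWithinAt)
    (fun t _ => (hB t).hasDerivWithinAt) hle

theorem le_taylor_add_cubic_of_deriv2_le {φ φ₁ φ₂ : ℝ → ℝ} {M : ℝ}
    (hφ : ∀ t, HasDerivAt φ (φ₁ t) t) (hφ₁ : ∀ t, HasDerivAt φ₁ (φ₂ t) t)
    (hφ₂ : ∀ t, 0 ≤ t → φ₂ t ≤ φ₂ 0 + M * t) {t : ℝ} (ht : 0 ≤ t) :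
    φ t ≤ φ 0 + φ₁ 0 * t + φ₂ 0 / 2 * t ^ 2 + M / 6 * t ^ 3 := by
  have hpoly : ∀ a b c d u : ℝ, HasDerivAt (fun u => a + b * u + c / 2 * u ^ 2 + d / 6 * u ^ 3)
      (b + c * u + d / 2 * u ^ 2) u := fun a b c d u => by
    have h := (((((hasDerivAt_id' u).const_mul b).const_add a).add
      ((hasDerivAt_pow 2 u).const_mul (c / 2))).add ((hasDerivAt_pow 3 u).const_mul (d / 6)))
    exact h.congr_deriv (by norm_num; ring)
  have hφ₁_le : ∀ u ∈ Icc 0 t, φ₁ u ≤ φ₁ 0 + φ₂ 0 * u + M / 2 * u ^ 2 := by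
    refine image_le_of_hasDerivAt_le hφ₁ (fun u => ?_) (by simp) fun u hu => hφ₂ u hu.1
    simpa using hpoly (φ₁ 0) (φ₂ 0) M 0 u
  have := image_le_of_hasDerivAt_le hφ (hpoly (φ 0) (φ₁ 0) (φ₂ 0) M) (by simp)
    (fun u hu => hφ₁_le u (Ico_subset_Icc_self hu)) ⟨ht, le_rfl⟩
  simpa using this

section InnerProductSpace

variable {E : Type*} [NormedAddCommGroup E] [InnerProductSpace ℝ E]

theorem real_inner_apply_self_le (T : E →L[ℝ] E) (v : E) : ⟪T v, v⟫ ≤ ‖T‖ * ‖v‖ ^ 2 :=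
  calc ⟪T v, v⟫ ≤ ‖T v‖ * ‖v‖ := real_inner_le_norm _ _
    _ ≤ ‖T‖ * ‖v‖ * ‖v‖ := by gcongr; exact T.le_opNorm v
    _ = ‖T‖ * ‖v‖ ^ 2 := by ring

theorem inner_add_half_inner_le_of_shifted_eq_neg (H : E →L[ℝ] E) (μ : ℝ) {g s : E}
    (hs : (H + μ • 1) s = -g) (hpsd : 0 ≤ ⟪(H + μ • 1) s, s⟫) :
    ⟪g, s⟫ + 1 / 2 * ⟪H s, s⟫ ≤ -(1 / 2) * μ * ‖s‖ ^ 2 := by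
  have happly : (H + μ • 1) s = H s + μ • s := rfl
  have hgs : ⟪g, s⟫ = -⟪(H + μ • 1) s, s⟫ := by rw [hs, inner_neg_left, neg_neg]
  rw [happly, inner_add_left, real_inner_smul_left, real_inner_self_eq_norm_sq] at hgs hpsd
  linarith

variable [CompleteSpace E]

theorem ContDiff.gradient {P : E → ℝ} {n : WithTop ℕ∞} (hP : ContDiff ℝ (n + 1) P) :
    ContDiff ℝ n (gradient P) :=
  (toDual ℝ E).symm.toContinuousLinearEquiv.toContinuousLinearMap.contDiff.comp
    (hP.fderiv_right le_rfl)

theorem le_taylor_add_cubic_of_lipschitz_hessian {P : E → ℝ} {L : ℝ} (hP : ContDiff ℝ 2 P)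
    (hL : ∀ y z, ‖fderiv ℝ (gradient P) y - fderiv ℝ (gradient P) z‖ ≤ L * ‖y - z‖) (x s : E) :
    P (x + s) ≤ P x + ⟪gradient P x, s⟫ + 1 / 2 * ⟪fderiv ℝ (gradient P) x s, s⟫
      + L / 6 * ‖s‖ ^ 3 := by
  set D := fderiv ℝ (gradient P)
  have hline : ∀ t : ℝ, HasDerivAt (fun t : ℝ => x + t • s) s t := fun t => by
    simpa using ((hasDerivAt_id t).smul_const s).const_add x
  have hφ : ∀ t : ℝ, HasDerivAt (fun t => P (x + t • s)) ⟪gradient P (x + t • s), s⟫ t :=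
    fun t => ((hP.differentiable two_ne_zero _).hasGradientAt.hasFDerivAt).comp_hasDerivAt t
      (hline t)
  have hφ₁ : ∀ t : ℝ,
      HasDerivAt (fun t => ⟪gradient P (x + t • s), s⟫) ⟪D (x + t • s) s, s⟫ t := fun t => by
      have hgrad := ((hP.gradient (n := 1)).differentiable one_ne_zero (x + t • s)).hasFDerivAt
      simpa using (hgrad.comp_hasDerivAt t (hline t)).inner ℝ (hasDerivAt_const t s)
  have hφ₂ : ∀ t : ℝ, 0 ≤ t →
      ⟪D (x + t • s) s, s⟫ ≤ ⟪D (x + (0 : ℝ) • s) s, s⟫ + L * ‖s‖ ^ 3 * t := fun t ht => by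
      have hdiff := real_inner_apply_self_le (D (x + t • s) - D x) s
      have hlip := hL (x + t • s) x
      rw [add_sub_cancel_left, norm_smul, Real.norm_of_nonneg ht] at hlip
      simp only [sub_apply, inner_sub_left, zero_smul, add_zero] at hdiff ⊢
      nlinarith [sq_nonneg ‖s‖]
  have h := le_taylor_add_cubic_of_deriv2_le hφ hφ₁ hφ₂ zero_le_one
  simp only [zero_smul, add_zero, one_smul, one_pow, mul_one] at h
  linarith

end InnerProductSpace

theorem statement7_general {n : ℕ} (P : En n → ℝ) (L₂ : ℝ)
    (hP : ContDiff ℝ 2 P)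
    (hhessLip : ∀ x x' : En n, ‖hessP P x - hessP P x'‖ ≤ L₂ * ‖x - x'‖)
    (x s g : En n) (H : En n →L[ℝ] En n)
    (lam σ ε₁ ε₂ : ℝ)
    (heq : (H + (σ * Real.sqrt ‖g‖) • (1 : En n →L[ℝ] En n) + lam • 1) s = -g)
    (hpsd : ∀ v : En n,
      0 ≤ ⟪(H + (σ * Real.sqrt ‖g‖) • (1 : En n →L[ℝ] En n) + lam • 1) v, v⟫)
    (hge : ‖gradient P x - g‖ ≤ ε₁)
    (hHe : ‖hessP P x - H‖ ≤ ε₂) :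
    P (x + s) ≤ P x - 1 / 2 * (σ * Real.sqrt ‖g‖ + lam) * ‖s‖ ^ 2
      + ε₁ * ‖s‖ + ε₂ / 2 * ‖s‖ ^ 2 + L₂ / 6 * ‖s‖ ^ 3 := by
  have hshift : H + (σ * Real.sqrt ‖g‖) • (1 : En n →L[ℝ] En n) + lam • 1
      = H + (σ * Real.sqrt ‖g‖ + lam) • 1 := by module
  have htaylor : P (x + s) ≤ P x + ⟪gradient P x, s⟫ + 1 / 2 * ⟪hessP P x s, s⟫
      + L₂ / 6 * ‖s‖ ^ 3 := le_taylor_add_cubic_of_lipschitz_hessian hP hhessLip x s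
  have hgrad : ⟪gradient P x - g, s⟫ ≤ ε₁ * ‖s‖ :=
    (real_inner_le_norm _ _).trans (by gcongr)
  have hhess : ⟪(hessP P x - H) s, s⟫ ≤ ε₂ * ‖s‖ ^ 2 :=
    (real_inner_apply_self_le _ s).trans (by gcongr)
  have hmodel := inner_add_half_inner_le_of_shifted_eq_neg H _ (hshift ▸ heq) (hshift ▸ hpsd s)
  rw [inner_sub_left] at hgrad
  rw [sub_apply, inner_sub_left] at hhess
  linarith

/-- If `(H + σ‖g‖^{1/2}I + λI)s = −g` with the regularized operator positive
semidefinite, and the gradient/Hessian estimates are `ε₁`/`ε₂`-accurate, then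
`P(x+s) ≤ P(x) − ½(σ‖g‖^{1/2} + λ)‖s‖² + ε₁‖s‖ + (ε₂/2)‖s‖² + (L₂/6)‖s‖³`. -/
theorem statement7 {n : ℕ} (P : En n → ℝ) (L₂ : ℝ)
    (hP : ContDiff ℝ 2 P)
    (hhessLip : ∀ x x' : En n, ‖hessP P x - hessP P x'‖ ≤ L₂ * ‖x - x'‖)
    (x s g : En n) (H : En n →L[ℝ] En n) (hH : IsSelfAdjoint H)
    (lam σ ε₁ ε₂ : ℝ) (hlam : 0 ≤ lam) (hσ : 0 ≤ σ) (hε₁ : 0 ≤ ε₁) (hε₂ : 0 ≤ ε₂)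
    (heq : (H + (σ * Real.sqrt ‖g‖) • (1 : En n →L[ℝ] En n) + lam • 1) s = -g)
    (hpsd : ∀ v : En n,
      0 ≤ ⟪(H + (σ * Real.sqrt ‖g‖) • (1 : En n →L[ℝ] En n) + lam • 1) v, v⟫)
    (hge : ‖gradient P x - g‖ ≤ ε₁)
    (hHe : ‖hessP P x - H‖ ≤ ε₂) :
    P (x + s) ≤ P x - 1 / 2 * (σ * Real.sqrt ‖g‖ + lam) * ‖s‖ ^ 2
      + ε₁ * ‖s‖ + ε₂ / 2 * ‖s‖ ^ 2 + L₂ / 6 * ‖s‖ ^ 3 :=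
  statement7_general P L₂ hP hhessLip x s g H lam σ ε₁ ε₂ heq hpsd hge hHe
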